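/- Let T ∈ ℝ^{n×n} be symmetric positive definite and V ∈ ℝ^{n×n} satisfy V^T T V = I. Then V^T T² V has the same eigenvalues as T, and if V_k denotes the first k columns of V and V_⊥ the remaining n−k columns, then by interlacing λ_1(V_⊥^T T² V_⊥) ≤ λ_1(T) and λ_k(V_k^T T² V_k) ≥ λ_n(T); consequently ‖V_⊥^T T² V_⊥‖_2 · ‖(V_k^T T² V_k)^{-1}‖_2 ≤ κ_2(T). Moreover this product is bounded below by λ_{k+1}(T)/λ_k(T). -/

import Mathlib

open Matrix MeasureTheory ProbabilityTheory

noncomputable def spec {m n : ℕ} (A : Matrix (Fin m) (Fin n) ℝ) : ℝ :=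
  ‖LinearMap.toContinuousLinearMap (Matrix.toEuclideanLin A)‖

noncomputable def eigDesc {n : ℕ} {M : Matrix (Fin n) (Fin n) ℝ} (hM : M.IsHermitian)
    (j : Fin n) : ℝ :=
  hM.eigenvalues (Tuple.sort hM.eigenvalues j.rev)

noncomputable def svDesc {m n : ℕ} (A : Matrix (Fin m) (Fin n) ℝ) (j : Fin n) : ℝ :=
  Real.sqrt (eigDesc (show (Aᵀ * A).IsHermitian by
    simpa using Matrix.isHermitian_conjTranspose_mul_self A) j)

noncomputable def sqrtM {n : ℕ} {M : Matrix (Fin n) (Fin n) ℝ} (hM : M.PosDef) :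
    Matrix (Fin n) (Fin n) ℝ :=
  hM.posSemidef.1.eigenvectorUnitary.1 *
    diagonal ((RCLike.ofReal : ℝ → ℝ) ∘ (√·) ∘ hM.posSemidef.1.eigenvalues) *
    (star hM.posSemidef.1.eigenvectorUnitary : Matrix (Fin n) (Fin n) ℝ)

def IsMoorePenrose {m n : ℕ} (A : Matrix (Fin m) (Fin n) ℝ)
    (B : Matrix (Fin n) (Fin m) ℝ) : Prop :=
  A * B * A = A ∧ B * A * B = B ∧ (A * B)ᵀ = A * B ∧ (B * A)ᵀ = B * A

namespace Stmt13Aux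

open scoped RealInnerProductSpace

variable {n : ℕ} {A : Matrix (Fin n) (Fin n) ℝ}

lemma inner_dot (x y : EuclideanSpace ℝ (Fin n)) : ⟪x, y⟫ = (x : Fin n → ℝ) ⬝ᵥ y := by
  simp [PiLp.inner_apply, dotProduct]
  exact Finset.sum_congr rfl fun _ _ => mul_comm _ _

lemma repr_mulVec (hA : A.IsHermitian) (x y : EuclideanSpace ℝ (Fin n))
    (hy : (y : Fin n → ℝ) = A *ᵥ (x : Fin n → ℝ)) (i : Fin n) :
    hA.eigenvectorBasis.repr y i = hA.eigenvalues i * hA.eigenvectorBasis.repr x i := by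
  rw [OrthonormalBasis.repr_apply_apply, OrthonormalBasis.repr_apply_apply,
    inner_dot, inner_dot, hy, dotProduct_mulVec]
  have hAT : Aᵀ = A := by have h : A.IsSymm := by simpa using hA
                          exact h
  have h2 : (hA.eigenvectorBasis i : Fin n → ℝ) ᵥ* A
      = A *ᵥ (hA.eigenvectorBasis i : Fin n → ℝ) :=
    calc (hA.eigenvectorBasis i : Fin n → ℝ) ᵥ* A
        = (hA.eigenvectorBasis i : Fin n → ℝ) ᵥ* Aᵀ := by rw [hAT]
      _ = A *ᵥ (hA.eigenvectorBasis i : Fin n → ℝ) := vecMul_transpose A _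
  have h3 : A *ᵥ (hA.eigenvectorBasis i : Fin n → ℝ)
      = hA.eigenvalues i • (hA.eigenvectorBasis i : Fin n → ℝ) := hA.mulVec_eigenvectorBasis i
  rw [h2, h3, smul_dotProduct]
  rfl

lemma parseval (x y : EuclideanSpace ℝ (Fin n))
    (b : OrthonormalBasis (Fin n) ℝ (EuclideanSpace ℝ (Fin n))) :
    ⟪x, y⟫ = ∑ i, b.repr x i * b.repr y i := by
  rw [← b.repr.inner_map_map x y, inner_dot]
  rfl

lemma rayleigh_eq (hA : A.IsHermitian) (x : EuclideanSpace ℝ (Fin n)) :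
    (x : Fin n → ℝ) ⬝ᵥ (A *ᵥ (x : Fin n → ℝ))
      = ∑ i, hA.eigenvalues i * (hA.eigenvectorBasis.repr x i)^2 := by
  have h := parseval x ((WithLp.equiv 2 (Fin n → ℝ)).symm (A *ᵥ (x : Fin n → ℝ)))
    hA.eigenvectorBasis
  rw [inner_dot] at h
  refine Eq.trans (show (x : Fin n → ℝ) ⬝ᵥ (A *ᵥ (x : Fin n → ℝ)) = _ from h) ?_
  refine Finset.sum_congr rfl fun i _ => ?_
  rw [repr_mulVec hA x ((WithLp.equiv 2 (Fin n → ℝ)).symm (A *ᵥ (x : Fin n → ℝ))) rfl i]; ring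

lemma dot_self_eq (x : EuclideanSpace ℝ (Fin n))
    (b : OrthonormalBasis (Fin n) ℝ (EuclideanSpace ℝ (Fin n))) :
    (x : Fin n → ℝ) ⬝ᵥ (x : Fin n → ℝ) = ∑ i, (b.repr x i)^2 := by
  have h := parseval x x b
  rw [inner_dot] at h
  exact Eq.trans h (Finset.sum_congr rfl fun i _ => (sq _).symm)

lemma mulVec_dot_mulVec (hA : A.IsHermitian) (x : EuclideanSpace ℝ (Fin n)) :
    (A *ᵥ (x : Fin n → ℝ)) ⬝ᵥ (A *ᵥ (x : Fin n → ℝ))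
      = ∑ i, (hA.eigenvalues i)^2 * (hA.eigenvectorBasis.repr x i)^2 := by
  have h := dot_self_eq ((WithLp.equiv 2 (Fin n → ℝ)).symm (A *ᵥ (x : Fin n → ℝ)))
    hA.eigenvectorBasis
  refine Eq.trans (show (A *ᵥ (x : Fin n → ℝ)) ⬝ᵥ (A *ᵥ (x : Fin n → ℝ)) = _ from h) ?_
  refine Finset.sum_congr rfl fun i _ => ?_
  rw [repr_mulVec hA x ((WithLp.equiv 2 (Fin n → ℝ)).symm (A *ᵥ (x : Fin n → ℝ))) rfl i]; ring

lemma eig_le_max (hA : A.IsHermitian) (hn : 0 < n) (i : Fin n) :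
    hA.eigenvalues i ≤ eigDesc hA ⟨0, hn⟩ := by
  have hmono := Tuple.monotone_sort hA.eigenvalues
  have h0 : (⟨0, hn⟩ : Fin n).rev = ⟨n - 1, by omega⟩ := by
    ext; simp [Fin.rev]
  have := hmono (a := (Tuple.sort hA.eigenvalues).symm i) (b := ⟨n - 1, by omega⟩)
    (by rw [Fin.le_def]; exact Nat.le_sub_one_of_lt (Fin.is_lt _))
  simpa [eigDesc, h0, Function.comp] using this

lemma min_le_eig (hA : A.IsHermitian) (hn : 0 < n) (i : Fin n) :
    eigDesc hA ⟨n - 1, by omega⟩ ≤ hA.eigenvalues i := by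
  have hmono := Tuple.monotone_sort hA.eigenvalues
  have h0 : (⟨n - 1, by omega⟩ : Fin n).rev = ⟨0, hn⟩ := by
    ext; simp [Fin.rev]; omega
  have := hmono (a := (⟨0, hn⟩ : Fin n)) (b := (Tuple.sort hA.eigenvalues).symm i)
    (by rw [Fin.le_def]; exact Nat.zero_le _)
  simpa [eigDesc, h0, Function.comp] using this

lemma rayleigh_le_max (hA : A.IsHermitian) (hn : 0 < n) (x : Fin n → ℝ) :
    x ⬝ᵥ (A *ᵥ x) ≤ eigDesc hA ⟨0, hn⟩ * (x ⬝ᵥ x) := by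
  have h1 := rayleigh_eq hA ((WithLp.equiv 2 (Fin n → ℝ)).symm x)
  have h2 := dot_self_eq ((WithLp.equiv 2 (Fin n → ℝ)).symm x) hA.eigenvectorBasis
  have e1 : (((WithLp.equiv 2 (Fin n → ℝ)).symm x) : Fin n → ℝ) = x := rfl
  rw [e1] at h1 h2
  rw [h1, h2, Finset.mul_sum]
  exact Finset.sum_le_sum fun i _ => mul_le_mul_of_nonneg_right (eig_le_max hA hn i) (sq_nonneg _)

lemma min_le_rayleigh (hA : A.IsHermitian) (hn : 0 < n) (x : Fin n → ℝ) :
    eigDesc hA ⟨n - 1, by omega⟩ * (x ⬝ᵥ x) ≤ x ⬝ᵥ (A *ᵥ x) := by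
  have h1 := rayleigh_eq hA ((WithLp.equiv 2 (Fin n → ℝ)).symm x)
  have h2 := dot_self_eq ((WithLp.equiv 2 (Fin n → ℝ)).symm x) hA.eigenvectorBasis
  have e1 : (((WithLp.equiv 2 (Fin n → ℝ)).symm x) : Fin n → ℝ) = x := rfl
  rw [e1] at h1 h2
  rw [h1, h2, Finset.mul_sum]
  exact Finset.sum_le_sum fun i _ => mul_le_mul_of_nonneg_right (min_le_eig hA hn i) (sq_nonneg _)

lemma exists_eigvec (hA : A.IsHermitian) (j : Fin n) :
    ∃ x : Fin n → ℝ, x ⬝ᵥ x = 1 ∧ A *ᵥ x = eigDesc hA j • x := by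
  refine ⟨hA.eigenvectorBasis (Tuple.sort hA.eigenvalues j.rev), ?_,
    hA.mulVec_eigenvectorBasis _⟩
  rw [← inner_dot, real_inner_self_eq_norm_sq,
    hA.eigenvectorBasis.orthonormal.1 (Tuple.sort hA.eigenvalues j.rev)]
  norm_num

lemma norm_sq_dot (x : EuclideanSpace ℝ (Fin n)) : ‖x‖^2 = (x : Fin n → ℝ) ⬝ᵥ x := by
  rw [← real_inner_self_eq_norm_sq, inner_dot]

lemma spec_ge {c : ℝ} (x : Fin n → ℝ) (hx : x ⬝ᵥ x = 1) (heig : A *ᵥ x = c • x) :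
    |c| ≤ spec A := by
  set x' : EuclideanSpace ℝ (Fin n) := (WithLp.equiv 2 (Fin n → ℝ)).symm x
  have hnx : ‖x'‖ = 1 := by
    have h2 : ‖x'‖^2 = 1 := by rw [norm_sq_dot]; exact hx
    nlinarith [norm_nonneg x']
  have hfx : (LinearMap.toContinuousLinearMap (Matrix.toEuclideanLin A)) x' = c • x' := by
    show Matrix.toEuclideanLin A x' = c • x'
    rw [Matrix.toEuclideanLin_apply]
    show (WithLp.equiv 2 (Fin n → ℝ)).symm (A *ᵥ x) = c • x'
    rw [heig]
    rfl
  have := (LinearMap.toContinuousLinearMap (Matrix.toEuclideanLin A)).le_opNorm x'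
  rw [hfx, norm_smul, hnx, mul_one, mul_one] at this
  exact (Real.norm_eq_abs c) ▸ this

lemma spec_le_bound {c : ℝ} (hc : 0 ≤ c)
    (h : ∀ x : Fin n → ℝ, (A *ᵥ x) ⬝ᵥ (A *ᵥ x) ≤ c^2 * (x ⬝ᵥ x)) :
    spec A ≤ c := by
  refine ContinuousLinearMap.opNorm_le_bound _ hc fun x => ?_
  have hfx : (LinearMap.toContinuousLinearMap (Matrix.toEuclideanLin A)) x
      = (WithLp.equiv 2 (Fin n → ℝ)).symm (A *ᵥ (x : Fin n → ℝ)) := rfl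
  rw [hfx]
  have h1 : ‖(WithLp.equiv 2 (Fin n → ℝ)).symm (A *ᵥ (x : Fin n → ℝ))‖^2 ≤ (c * ‖x‖)^2 := by
    rw [norm_sq_dot, mul_pow, norm_sq_dot]
    exact h x
  have h2 := Real.sqrt_le_sqrt h1
  rwa [Real.sqrt_sq (norm_nonneg _), Real.sqrt_sq (by positivity)] at h2

lemma spec_le_max (hA : A.PosSemidef) (hn : 0 < n) : spec A ≤ eigDesc hA.1 ⟨0, hn⟩ := by
  have hc : 0 ≤ eigDesc hA.1 ⟨0, hn⟩ := hA.eigenvalues_nonneg _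
  refine spec_le_bound hc fun x => ?_
  have h1 := mulVec_dot_mulVec hA.1 ((WithLp.equiv 2 (Fin n → ℝ)).symm x)
  have h2 := dot_self_eq ((WithLp.equiv 2 (Fin n → ℝ)).symm x) hA.1.eigenvectorBasis
  have e1 : (((WithLp.equiv 2 (Fin n → ℝ)).symm x) : Fin n → ℝ) = x := rfl
  rw [e1] at h1 h2
  rw [h1, h2, Finset.mul_sum]
  refine Finset.sum_le_sum fun i _ => mul_le_mul_of_nonneg_right ?_ (sq_nonneg _)
  exact pow_le_pow_left₀ (hA.eigenvalues_nonneg i) (eig_le_max hA.1 hn i) 2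

lemma spec_inv_le (hA : A.PosDef) (hn : 0 < n) :
    spec A⁻¹ ≤ (eigDesc hA.1 ⟨n - 1, by omega⟩)⁻¹ := by
  have hmin : 0 < eigDesc hA.1 ⟨n - 1, by omega⟩ := hA.eigenvalues_pos _
  have hdet : IsUnit A.det := isUnit_iff_ne_zero.mpr (ne_of_gt hA.det_pos)
  refine spec_le_bound (by positivity) fun x => ?_
  set y : Fin n → ℝ := A⁻¹ *ᵥ x with hy
  have hxy : A *ᵥ y = x := by
    rw [hy, mulVec_mulVec, Matrix.mul_nonsing_inv A hdet, one_mulVec]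
  have key : (eigDesc hA.1 ⟨n - 1, by omega⟩)^2 * (y ⬝ᵥ y) ≤ (A *ᵥ y) ⬝ᵥ (A *ᵥ y) := by
    have h1 := mulVec_dot_mulVec hA.1 ((WithLp.equiv 2 (Fin n → ℝ)).symm y)
    have h2 := dot_self_eq ((WithLp.equiv 2 (Fin n → ℝ)).symm y) hA.1.eigenvectorBasis
    have e1 : (((WithLp.equiv 2 (Fin n → ℝ)).symm y) : Fin n → ℝ) = y := rfl
    rw [e1] at h1 h2
    rw [h1, h2, Finset.mul_sum]
    refine Finset.sum_le_sum fun i _ => mul_le_mul_of_nonneg_right ?_ (sq_nonneg _)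
    exact pow_le_pow_left₀ (le_of_lt hmin) (min_le_eig hA.1 (by omega) i) 2
  rw [hxy] at key
  rw [inv_pow, inv_mul_eq_div, le_div_iff₀ (by positivity)]
  nlinarith [key]


lemma dot_sum_left {N p : ℕ} (f : Fin p → Fin N → ℝ) (v : Fin N → ℝ) :
    (∑ i, f i) ⬝ᵥ v = ∑ i, f i ⬝ᵥ v := by
  simp only [dotProduct, Finset.sum_apply, Finset.sum_mul]
  rw [Finset.sum_comm]

lemma dot_sum_right {N p : ℕ} (f : Fin p → Fin N → ℝ) (v : Fin N → ℝ) :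
    v ⬝ᵥ (∑ i, f i) = ∑ i, v ⬝ᵥ f i := by
  simp only [dotProduct, Finset.sum_apply, Finset.mul_sum]
  rw [Finset.sum_comm]

lemma mulVec_sum' {N p : ℕ} (M : Matrix (Fin N) (Fin N) ℝ) (f : Fin p → Fin N → ℝ) :
    M *ᵥ (∑ i, f i) = ∑ i, M *ᵥ f i := by
  ext j
  simp only [mulVec, Finset.sum_apply]
  rw [dot_sum_right]

-- GEN interlacing helper
lemma gen_interlace {N m q : ℕ} (M : Matrix (Fin N) (Fin N) ℝ)
    (σe : (Fin q) ⊕ (Fin m) ≃ Fin N)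
    (w : Fin (q+1) → (Fin N → ℝ))
    (hw : ∀ i j, w i ⬝ᵥ w j = (if i = j then (1:ℝ) else 0))
    (ν : Fin (q+1) → ℝ) (hv : ∀ i, M *ᵥ w i = ν i • w i)
    (lam : ℝ) (hlam : ∀ i, lam ≤ ν i)
    (Γ : Matrix (Fin m) (Fin m) ℝ)
    (hΓ : Γ = M.submatrix (σe ∘ Sum.inr) (σe ∘ Sum.inr)) :
    ∃ y : Fin m → ℝ, 0 < y ⬝ᵥ y ∧ lam * (y ⬝ᵥ y) ≤ y ⬝ᵥ (Γ *ᵥ y) := by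
  -- the linear map to the q coordinates
  classical
  let L : (Fin (q+1) → ℝ) →ₗ[ℝ] (Fin q → ℝ) :=
    { toFun := fun c j => ∑ i, c i * w i (σe (Sum.inl j))
      map_add' := by
        intro a b; funext j; simp [add_mul, Finset.sum_add_distrib]
      map_smul' := by
        intro t a; funext j; simp [Finset.mul_sum, mul_assoc] }
  have hnotinj : ¬ Function.Injective L := by
    intro hinj
    have := LinearMap.finrank_le_finrank_of_injective hinj
    simp [Module.finrank_pi] at this
  rw [Function.not_injective_iff] at hnotinj
  obtain ⟨a, b, hab, hne⟩ := hnotinj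
  set d : Fin (q+1) → ℝ := a - b with hd
  have hdne : d ≠ 0 := sub_ne_zero_of_ne hne
  have hLd : ∀ j, ∑ i, d i * w i (σe (Sum.inl j)) = 0 := by
    intro j
    have : L d = 0 := by rw [hd, map_sub, hab, sub_self]
    exact congrFun this j
  -- the candidate vector
  set x : Fin N → ℝ := ∑ i, d i • w i with hx
  have hxl : ∀ j, x (σe (Sum.inl j)) = 0 := by
    intro j; rw [hx]; simpa [Finset.sum_apply] using hLd j
  set y : Fin m → ℝ := fun j => x (σe (Sum.inr j)) with hy
  -- dot products of x with w
  have hxw : x ⬝ᵥ x = ∑ i, d i ^ 2 := by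
    rw [hx, dot_sum_left]
    refine Finset.sum_congr rfl fun i _ => ?_
    rw [smul_dotProduct, dot_sum_right]
    simp only [dotProduct_smul]
    simp [hw, sq, smul_eq_mul]
  have hdpos : 0 < ∑ i, d i ^ 2 := by
    obtain ⟨i0, hi0⟩ := Function.ne_iff.mp hdne
    exact Finset.sum_pos' (fun i _ => sq_nonneg _)
      ⟨i0, Finset.mem_univ _, lt_of_le_of_ne (sq_nonneg _) (Ne.symm (pow_ne_zero 2 hi0))⟩
  -- rayleigh of x
  have hMx : M *ᵥ x = ∑ i, (d i * ν i) • w i := by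
    rw [hx, mulVec_sum' M]
    refine Finset.sum_congr rfl fun i _ => ?_
    rw [mulVec_smul, hv i, smul_smul]
  have hxMx : x ⬝ᵥ (M *ᵥ x) = ∑ i, ν i * d i ^ 2 := by
    rw [hMx, hx, dot_sum_left]
    refine Finset.sum_congr rfl fun i _ => ?_
    rw [smul_dotProduct, dot_sum_right]
    simp only [dotProduct_smul]
    simp [hw, sq, smul_eq_mul]
    ring
  -- splitting sums
  have hsplit : ∀ g : Fin N → ℝ, ∑ i, g i = (∑ j : Fin q, g (σe (Sum.inl j))) +
      (∑ j : Fin m, g (σe (Sum.inr j))) := by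
    intro g
    rw [← Equiv.sum_comp σe g, Fintype.sum_sum_type]
  have hyy : y ⬝ᵥ y = x ⬝ᵥ x := by
    rw [hy]
    show ∑ j : Fin m, x (σe (Sum.inr j)) * x (σe (Sum.inr j)) = ∑ i, x i * x i
    rw [hsplit (fun i => x i * x i)]
    simp [hxl]
  have hyI : y ⬝ᵥ (Γ *ᵥ y) = x ⬝ᵥ (M *ᵥ x) := by
    have hMxr : ∀ j, (Γ *ᵥ y) j = (M *ᵥ x) (σe (Sum.inr j)) := by
      intro j
      show ∑ j', Γ j j' * y j' = ∑ i', M (σe (Sum.inr j)) i' * x i'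
      rw [hsplit (fun i' => M (σe (Sum.inr j)) i' * x i')]
      simp [hxl, hΓ, hy]
    show ∑ j, y j * (Γ *ᵥ y) j = ∑ i, x i * (M *ᵥ x) i
    rw [hsplit (fun i => x i * (M *ᵥ x) i)]
    simp only [hxl, zero_mul, Finset.sum_const_zero, zero_add]
    refine Finset.sum_congr rfl fun j _ => ?_
    rw [hMxr j]
  refine ⟨y, ?_, ?_⟩
  · rw [hyy, hxw]; exact hdpos
  · rw [hyI, hyy, hxw, hxMx, Finset.mul_sum]
    exact Finset.sum_le_sum fun i _ => mul_le_mul_of_nonneg_right (hlam i) (sq_nonneg _)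


open Polynomial in
lemma charpoly_conj {N : ℕ} (T Q : Matrix (Fin N) (Fin N) ℝ) (h1 : Qᵀ * Q = 1) :
    (Qᵀ * T * Q).charpoly = T.charpoly := by
  have key : (C : ℝ →+* ℝ[X]).mapMatrix Qᵀ * charmatrix T * (C : ℝ →+* ℝ[X]).mapMatrix Q
      = charmatrix (Qᵀ * T * Q) := by
    rw [charmatrix, charmatrix, mul_sub, sub_mul]
    congr 1
    · rw [← (scalar_commute (X : ℝ[X]) (fun r' => Commute.all _ _) _).eq, mul_assoc,
        ← RingHom.map_mul, h1]
      simp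
    · rw [← RingHom.map_mul, ← RingHom.map_mul, mul_assoc]
  have hdet := congrArg det key
  rw [det_mul, det_mul] at hdet
  have hQQ : det ((C : ℝ →+* ℝ[X]).mapMatrix Qᵀ) * det ((C : ℝ →+* ℝ[X]).mapMatrix Q) = 1 := by
    rw [← det_mul, ← RingHom.map_mul, h1]
    simp
  rw [Matrix.charpoly, Matrix.charpoly, ← hdet]
  linear_combination T.charmatrix.det * hQQ


lemma sub_eq {n m : ℕ} (V T2 : Matrix (Fin n) (Fin n) ℝ) (e : Fin m → Fin n) :
    (V.submatrix id e)ᵀ * T2 * V.submatrix id e = (Vᵀ * T2 * V).submatrix e e := by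
  ext a b
  simp [Matrix.mul_apply, Finset.sum_mul, Finset.mul_sum]

lemma conj_dot {N : ℕ} (T Q : Matrix (Fin N) (Fin N) ℝ) (x : Fin N → ℝ) :
    x ⬝ᵥ ((Qᵀ * T * Q) *ᵥ x) = (Q *ᵥ x) ⬝ᵥ (T *ᵥ (Q *ᵥ x)) := by
  rw [← mulVec_mulVec, ← mulVec_mulVec, dotProduct_mulVec x Qᵀ, vecMul_transpose]

lemma dot_transfer {N : ℕ} (Q : Matrix (Fin N) (Fin N) ℝ) (h1 : Qᵀ * Q = 1) (x : Fin N → ℝ) :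
    (Q *ᵥ x) ⬝ᵥ (Q *ᵥ x) = x ⬝ᵥ x := by
  have := conj_dot 1 Q x
  rw [mul_one, h1, one_mulVec, one_mulVec] at this
  exact this.symm

lemma mulVec_ne_zero {N : ℕ} (Q : Matrix (Fin N) (Fin N) ℝ) (h1 : Qᵀ * Q = 1)
    {x : Fin N → ℝ} (hx : x ≠ 0) : Q *ᵥ x ≠ 0 := by
  intro h
  apply hx
  have : (Qᵀ * Q) *ᵥ x = Qᵀ *ᵥ (Q *ᵥ x) := (mulVec_mulVec _ _ _).symm
  rw [h1, one_mulVec, h, mulVec_zero] at this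
  exact this

lemma transpose_dot {N : ℕ} (Q : Matrix (Fin N) (Fin N) ℝ) (a b : Fin N → ℝ) :
    (Qᵀ *ᵥ a) ⬝ᵥ b = a ⬝ᵥ (Q *ᵥ b) := by
  rw [mulVec_transpose, ← dotProduct_mulVec]

lemma block_dot {N m q : ℕ} (M : Matrix (Fin N) (Fin N) ℝ) (σe : (Fin q) ⊕ (Fin m) ≃ Fin N)
    (y : Fin m → ℝ) :
    ∃ x : Fin N → ℝ,
      y ⬝ᵥ ((M.submatrix (σe ∘ Sum.inr) (σe ∘ Sum.inr)) *ᵥ y) = x ⬝ᵥ (M *ᵥ x) ∧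
      y ⬝ᵥ y = x ⬝ᵥ x ∧ (y ≠ 0 → x ≠ 0) := by
  classical
  set x : Fin N → ℝ := fun i => Sum.elim (fun _ => (0:ℝ)) y (σe.symm i) with hx
  have hxl : ∀ j, x (σe (Sum.inl j)) = 0 := by intro j; simp [hx]
  have hxr : ∀ j, x (σe (Sum.inr j)) = y j := by intro j; simp [hx]
  have hsplit : ∀ g : Fin N → ℝ, ∑ i, g i = (∑ j : Fin q, g (σe (Sum.inl j))) +
      (∑ j : Fin m, g (σe (Sum.inr j))) := by
    intro g
    rw [← Equiv.sum_comp σe g, Fintype.sum_sum_type]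
  refine ⟨x, ?_, ?_, ?_⟩
  · have hMxr : ∀ j, ((M.submatrix (σe ∘ Sum.inr) (σe ∘ Sum.inr)) *ᵥ y) j
        = (M *ᵥ x) (σe (Sum.inr j)) := by
      intro j
      show ∑ j', M (σe (Sum.inr j)) (σe (Sum.inr j')) * y j'
          = ∑ i', M (σe (Sum.inr j)) i' * x i'
      rw [hsplit (fun i' => M (σe (Sum.inr j)) i' * x i')]
      simp [hxl, hxr]
    show ∑ j, y j * ((M.submatrix (σe ∘ Sum.inr) (σe ∘ Sum.inr)) *ᵥ y) j
        = ∑ i, x i * (M *ᵥ x) i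
    rw [hsplit (fun i => x i * (M *ᵥ x) i)]
    simp only [hxl, zero_mul, Finset.sum_const_zero, zero_add]
    refine Finset.sum_congr rfl fun j _ => ?_
    rw [hMxr j, hxr j]
  · show ∑ j, y j * y j = ∑ i, x i * x i
    rw [hsplit (fun i => x i * x i)]
    simp [hxl, hxr]
  · intro hy h0
    apply hy
    funext j
    have := congrFun h0 (σe (Sum.inr j))
    rw [hxr j] at this
    simpa using this


end Stmt13Aux

open Stmt13Aux in
/-- with $V^TTV=I$ and $V=[V_k\ V_\perp]$ ($n = k+r$ columns),
$V^TT^2V$ has the same eigenvalues as $T$; by interlacing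
$\lambda_1(V_\perp^TT^2V_\perp)\le\lambda_1(T)$ and
$\lambda_k(V_k^TT^2V_k)\ge\lambda_n(T)$; consequently
$\|V_\perp^TT^2V_\perp\|_2\|(V_k^TT^2V_k)^{-1}\|_2\le\kappa_2(T)$, and this product
is bounded below by $\lambda_{k+1}(T)/\lambda_k(T)$. -/
theorem stmt13 {k r : ℕ} (hk : 1 ≤ k) (hr : 1 ≤ r)
    (T : Matrix (Fin (k + r)) (Fin (k + r)) ℝ) (hT : T.PosDef)
    (V : Matrix (Fin (k + r)) (Fin (k + r)) ℝ) (hV : Vᵀ * T * V = 1)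
    (hΓ1 : ((V.submatrix id (Fin.castAdd r))ᵀ * T ^ 2 *
            V.submatrix id (Fin.castAdd r)).IsHermitian)
    (hΓ2 : ((V.submatrix id (Fin.natAdd k))ᵀ * T ^ 2 *
            V.submatrix id (Fin.natAdd k)).IsHermitian) :
    (Vᵀ * T ^ 2 * V).charpoly = T.charpoly ∧
    eigDesc hΓ2 ⟨0, by omega⟩ ≤ eigDesc hT.1 ⟨0, by omega⟩ ∧
    eigDesc hT.1 ⟨k + r - 1, by omega⟩ ≤ eigDesc hΓ1 ⟨k - 1, by omega⟩ ∧
    spec ((V.submatrix id (Fin.natAdd k))ᵀ * T ^ 2 * V.submatrix id (Fin.natAdd k)) *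
      spec (((V.submatrix id (Fin.castAdd r))ᵀ * T ^ 2 *
             V.submatrix id (Fin.castAdd r))⁻¹) ≤ spec T * spec T⁻¹ ∧
    eigDesc hT.1 ⟨k, by omega⟩ / eigDesc hT.1 ⟨k - 1, by omega⟩ ≤
      spec ((V.submatrix id (Fin.natAdd k))ᵀ * T ^ 2 * V.submatrix id (Fin.natAdd k)) *
        spec (((V.submatrix id (Fin.castAdd r))ᵀ * T ^ 2 *
               V.submatrix id (Fin.castAdd r))⁻¹) := by
  classical
  have hposA : ∀ j, 0 < eigDesc hT.1 j := fun j => hT.eigenvalues_pos _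
  open scoped MatrixOrder Matrix.Norms.L2Operator in
  set S := CFC.sqrt T with hSdef
  open scoped MatrixOrder Matrix.Norms.L2Operator in
  have hSS : S * S = T := CFC.sqrt_mul_sqrt_self T hT.posSemidef.nonneg
  open scoped MatrixOrder Matrix.Norms.L2Operator in
  have hSH : Sᵀ = S := by
    have h : S.IsSymm := by simpa using (CFC.sqrt_nonneg T).posSemidef.1
    exact h
  set Q := S * V with hQdef
  have hQT : Qᵀ = Vᵀ * S := by rw [hQdef, transpose_mul, hSH]
  have hQ1 : Qᵀ * Q = 1 := by
    rw [hQT, hQdef]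
    have : Vᵀ * S * (S * V) = Vᵀ * T * V := by
      rw [← hSS]
      simp only [Matrix.mul_assoc]
    rw [this, hV]
  have hQ2 : Q * Qᵀ = 1 := mul_eq_one_comm.mp hQ1
  have hM : Vᵀ * T ^ 2 * V = Qᵀ * T * Q := by
    rw [hQT, hQdef, ← hSS]
    simp only [pow_two, Matrix.mul_assoc]
  -- the two block equalities
  set σe2 : (Fin k) ⊕ (Fin r) ≃ Fin (k + r) := finSumFinEquiv with hσe2def
  set σe1 : (Fin r) ⊕ (Fin k) ≃ Fin (k + r) :=
    (Equiv.sumComm (Fin r) (Fin k)).trans finSumFinEquiv with hσe1def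
  have hσe2 : (σe2 ∘ Sum.inr : Fin r → Fin (k + r)) = Fin.natAdd k := by
    funext j; simp [hσe2def]
  have hσe1 : (σe1 ∘ Sum.inr : Fin k → Fin (k + r)) = Fin.castAdd r := by
    funext j; simp [hσe1def]
  have hsub2 : (V.submatrix id (Fin.natAdd k))ᵀ * T ^ 2 * V.submatrix id (Fin.natAdd k)
      = (Vᵀ * T ^ 2 * V).submatrix (σe2 ∘ Sum.inr) (σe2 ∘ Sum.inr) := by
    rw [sub_eq, hσe2]
  have hsub1 : (V.submatrix id (Fin.castAdd r))ᵀ * T ^ 2 * V.submatrix id (Fin.castAdd r)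
      = (Vᵀ * T ^ 2 * V).submatrix (σe1 ∘ Sum.inr) (σe1 ∘ Sum.inr) := by
    rw [sub_eq, hσe1]
  -- positive definiteness of the two blocks
  have hblockPD : ∀ {m q : ℕ} (σe : (Fin q) ⊕ (Fin m) ≃ Fin (k + r))
      (Γ : Matrix (Fin m) (Fin m) ℝ)
      (hΓeq : Γ = (Vᵀ * T ^ 2 * V).submatrix (σe ∘ Sum.inr) (σe ∘ Sum.inr))
      (hΓH : Γ.IsHermitian), Γ.PosDef := by
    intro m q σe Γ hΓeq hΓH
    rw [posDef_iff_dotProduct_mulVec]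
    refine ⟨hΓH, fun y hy => ?_⟩
    rw [star_trivial]
    obtain ⟨x, hb1, hb2, hb3⟩ := block_dot (Vᵀ * T ^ 2 * V) σe y
    rw [hΓeq, hb1, hM, conj_dot]
    have hx : x ≠ 0 := hb3 hy
    have := hT.dotProduct_mulVec_pos (mulVec_ne_zero Q hQ1 hx)
    rwa [star_trivial] at this
  have hΓ2PD := hblockPD σe2 _ hsub2 hΓ2
  have hΓ1PD := hblockPD σe1 _ hsub1 hΓ1
  -- conjunct 2
  have c2 : eigDesc hΓ2 ⟨0, by omega⟩ ≤ eigDesc hT.1 ⟨0, by omega⟩ := by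
    obtain ⟨y, hy1, hy2⟩ := exists_eigvec hΓ2 ⟨0, by omega⟩
    obtain ⟨x, hb1, hb2, hb3⟩ := block_dot (Vᵀ * T ^ 2 * V) σe2 y
    have hray : y ⬝ᵥ (((V.submatrix id (Fin.natAdd k))ᵀ * T ^ 2 *
        V.submatrix id (Fin.natAdd k)) *ᵥ y) = eigDesc hΓ2 ⟨0, by omega⟩ := by
      rw [hy2, dotProduct_smul, hy1, smul_eq_mul, mul_one]
    have key : y ⬝ᵥ (((V.submatrix id (Fin.natAdd k))ᵀ * T ^ 2 *
        V.submatrix id (Fin.natAdd k)) *ᵥ y) = (Q *ᵥ x) ⬝ᵥ (T *ᵥ (Q *ᵥ x)) := by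
      rw [hsub2, hb1, hM, conj_dot]
    have hz := rayleigh_le_max hT.1 (by omega) (Q *ᵥ x)
    rw [dot_transfer Q hQ1, ← hb2, hy1, mul_one] at hz
    calc eigDesc hΓ2 ⟨0, by omega⟩ = (Q *ᵥ x) ⬝ᵥ (T *ᵥ (Q *ᵥ x)) := hray.symm.trans key
      _ ≤ eigDesc hT.1 ⟨0, by omega⟩ := hz
  -- conjunct 3
  have c3 : eigDesc hT.1 ⟨k + r - 1, by omega⟩ ≤ eigDesc hΓ1 ⟨k - 1, by omega⟩ := by
    obtain ⟨y, hy1, hy2⟩ := exists_eigvec hΓ1 ⟨k - 1, by omega⟩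
    obtain ⟨x, hb1, hb2, hb3⟩ := block_dot (Vᵀ * T ^ 2 * V) σe1 y
    have hray : y ⬝ᵥ (((V.submatrix id (Fin.castAdd r))ᵀ * T ^ 2 *
        V.submatrix id (Fin.castAdd r)) *ᵥ y) = eigDesc hΓ1 ⟨k - 1, by omega⟩ := by
      rw [hy2, dotProduct_smul, hy1, smul_eq_mul, mul_one]
    have key : y ⬝ᵥ (((V.submatrix id (Fin.castAdd r))ᵀ * T ^ 2 *
        V.submatrix id (Fin.castAdd r)) *ᵥ y) = (Q *ᵥ x) ⬝ᵥ (T *ᵥ (Q *ᵥ x)) := by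
      rw [hsub1, hb1, hM, conj_dot]
    have hz := min_le_rayleigh hT.1 (by omega) (Q *ᵥ x)
    rw [dot_transfer Q hQ1, ← hb2, hy1, mul_one] at hz
    calc eigDesc hT.1 ⟨k + r - 1, by omega⟩ ≤ (Q *ᵥ x) ⬝ᵥ (T *ᵥ (Q *ᵥ x)) := hz
      _ = eigDesc hΓ1 ⟨k - 1, by omega⟩ := key.symm.trans hray
  -- interlacing A : λ_{k+1}(T) ≤ λmax(Γ2)
  have hIA : eigDesc hT.1 ⟨k, by omega⟩ ≤ eigDesc hΓ2 ⟨0, by omega⟩ := by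
    set σT := Tuple.sort hT.1.eigenvalues with hσT
    have hmono := Tuple.monotone_sort hT.1.eigenvalues
    set w : Fin (k + 1) → (Fin (k + r) → ℝ) := fun i =>
      Qᵀ *ᵥ (hT.1.eigenvectorBasis (σT ⟨r - 1 + i.1, by omega⟩) : Fin (k + r) → ℝ) with hwdef
    have horto := orthonormal_iff_ite.mp hT.1.eigenvectorBasis.orthonormal
    have hw : ∀ i j, w i ⬝ᵥ w j = (if i = j then (1:ℝ) else 0) := by
      intro i j
      rw [hwdef]
      simp only
      rw [transpose_dot, mulVec_mulVec, hQ2, one_mulVec, ← inner_dot, horto]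
      congr 1
      simp only [Equiv.apply_eq_iff_eq, Fin.mk.injEq, eq_iff_iff]
      constructor
      · intro h; exact Fin.ext (by omega)
      · intro h; rw [h]
    set ν : Fin (k + 1) → ℝ := fun i => hT.1.eigenvalues (σT ⟨r - 1 + i.1, by omega⟩) with hνdef
    have hv : ∀ i, (Vᵀ * T ^ 2 * V) *ᵥ w i = ν i • w i := by
      intro i
      rw [hM, hwdef]
      simp only
      rw [← mulVec_mulVec, mulVec_mulVec _ Q Qᵀ, hQ2, one_mulVec, ← mulVec_mulVec]
      have he : T *ᵥ (hT.1.eigenvectorBasis (σT ⟨r - 1 + i.1, by omega⟩) : Fin (k + r) → ℝ)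
          = ν i • (hT.1.eigenvectorBasis (σT ⟨r - 1 + i.1, by omega⟩) : Fin (k + r) → ℝ) :=
        hT.1.mulVec_eigenvectorBasis _
      rw [he, mulVec_smul]
    have hlam : ∀ i, eigDesc hT.1 ⟨k, by omega⟩ ≤ ν i := by
      intro i
      have hrev : ((⟨k, by omega⟩ : Fin (k + r))).rev = ⟨r - 1, by omega⟩ := by
        ext; simp [Fin.rev]; omega
      have := hmono (a := (⟨r - 1, by omega⟩ : Fin (k + r)))
        (b := ⟨r - 1 + i.1, by omega⟩) (by rw [Fin.mk_le_mk]; omega)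
      simpa [eigDesc, hrev, hνdef, Function.comp, hσT] using this
    obtain ⟨y, hy0, hyl⟩ := gen_interlace (Vᵀ * T ^ 2 * V) σe2 w hw ν hv _ hlam _ hsub2
    have h2 := rayleigh_le_max hΓ2 (by omega : 0 < r) y
    nlinarith [hy0, hyl, h2]
  -- interlacing B : λmin(Γ1) ≤ λ_k(T)
  have hIB : eigDesc hΓ1 ⟨k - 1, by omega⟩ ≤ eigDesc hT.1 ⟨k - 1, by omega⟩ := by
    set σT := Tuple.sort hT.1.eigenvalues with hσT
    have hmono := Tuple.monotone_sort hT.1.eigenvalues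
    set w : Fin (r + 1) → (Fin (k + r) → ℝ) := fun i =>
      Qᵀ *ᵥ (hT.1.eigenvectorBasis (σT ⟨i.1, by omega⟩) : Fin (k + r) → ℝ) with hwdef
    have horto := orthonormal_iff_ite.mp hT.1.eigenvectorBasis.orthonormal
    have hw : ∀ i j, w i ⬝ᵥ w j = (if i = j then (1:ℝ) else 0) := by
      intro i j
      rw [hwdef]
      simp only
      rw [transpose_dot, mulVec_mulVec, hQ2, one_mulVec, ← inner_dot, horto]
      congr 1
      simp only [Equiv.apply_eq_iff_eq, Fin.mk.injEq, eq_iff_iff]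
      constructor
      · intro h; exact Fin.ext (by omega)
      · intro h; rw [h]
    set ν : Fin (r + 1) → ℝ := fun i => -(hT.1.eigenvalues (σT ⟨i.1, by omega⟩)) with hνdef
    have hv : ∀ i, (-(Vᵀ * T ^ 2 * V)) *ᵥ w i = ν i • w i := by
      intro i
      rw [neg_mulVec, hM, hwdef]
      simp only
      rw [← mulVec_mulVec, mulVec_mulVec _ Q Qᵀ, hQ2, one_mulVec, ← mulVec_mulVec]
      have he : T *ᵥ (hT.1.eigenvectorBasis (σT ⟨i.1, by omega⟩) : Fin (k + r) → ℝ)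
          = hT.1.eigenvalues (σT ⟨i.1, by omega⟩) •
            (hT.1.eigenvectorBasis (σT ⟨i.1, by omega⟩) : Fin (k + r) → ℝ) :=
        hT.1.mulVec_eigenvectorBasis _
      rw [he, mulVec_smul, hνdef, neg_smul]
    have hlam : ∀ i, -(eigDesc hT.1 ⟨k - 1, by omega⟩) ≤ ν i := by
      intro i
      have hrev : ((⟨k - 1, by omega⟩ : Fin (k + r))).rev = ⟨r, by omega⟩ := by
        ext; simp [Fin.rev]; omega
      have := hmono (a := (⟨i.1, by omega⟩ : Fin (k + r)))
        (b := ⟨r, by omega⟩) (by rw [Fin.mk_le_mk]; have := i.isLt; omega)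
      rw [hνdef]
      simp only [neg_le_neg_iff]
      simpa [eigDesc, hrev, Function.comp, hσT] using this
    have hnsub : -((V.submatrix id (Fin.castAdd r))ᵀ * T ^ 2 * V.submatrix id (Fin.castAdd r))
        = (-(Vᵀ * T ^ 2 * V)).submatrix (σe1 ∘ Sum.inr) (σe1 ∘ Sum.inr) := by
      rw [hsub1]
      ext a b
      simp
    obtain ⟨y, hy0, hyl⟩ := gen_interlace (-(Vᵀ * T ^ 2 * V)) σe1 w hw ν hv _ hlam _ hnsub
    have hneg : y ⬝ᵥ ((-((V.submatrix id (Fin.castAdd r))ᵀ * T ^ 2 *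
        V.submatrix id (Fin.castAdd r))) *ᵥ y)
        = -(y ⬝ᵥ (((V.submatrix id (Fin.castAdd r))ᵀ * T ^ 2 *
            V.submatrix id (Fin.castAdd r)) *ᵥ y)) := by
      rw [neg_mulVec, dotProduct_neg]
    rw [hneg] at hyl
    have h2 := min_le_rayleigh hΓ1 (show 0 < k by omega) y
    nlinarith [hy0, hyl, h2]
  -- spectral norm bounds
  have hdetT : IsUnit T.det := isUnit_iff_ne_zero.mpr (ne_of_gt hT.det_pos)
  have hposG1 : 0 < eigDesc hΓ1 ⟨k - 1, by omega⟩ := hΓ1PD.eigenvalues_pos _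
  have hposG2 : 0 < eigDesc hΓ2 ⟨0, by omega⟩ := hΓ2PD.eigenvalues_pos _
  have hs2 : spec ((V.submatrix id (Fin.natAdd k))ᵀ * T ^ 2 * V.submatrix id (Fin.natAdd k))
      ≤ eigDesc hΓ2 ⟨0, by omega⟩ := spec_le_max hΓ2PD.posSemidef (by omega)
  have hspecT : eigDesc hT.1 ⟨0, by omega⟩ ≤ spec T := by
    obtain ⟨x, hx1, hx2⟩ := exists_eigvec hT.1 ⟨0, by omega⟩
    have := spec_ge x hx1 hx2
    rwa [abs_of_pos (hposA _)] at this
  have hsinv : spec (((V.submatrix id (Fin.castAdd r))ᵀ * T ^ 2 *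
      V.submatrix id (Fin.castAdd r))⁻¹) ≤ (eigDesc hΓ1 ⟨k - 1, by omega⟩)⁻¹ :=
    spec_inv_le hΓ1PD (by omega)
  have hsinvT : (eigDesc hT.1 ⟨k + r - 1, by omega⟩)⁻¹ ≤ spec T⁻¹ := by
    obtain ⟨x, hx1, hx2⟩ := exists_eigvec hT.1 ⟨k + r - 1, by omega⟩
    have h1 : T⁻¹ *ᵥ (T *ᵥ x) = x := by
      rw [mulVec_mulVec, Matrix.nonsing_inv_mul T hdetT, one_mulVec]
    rw [hx2, mulVec_smul] at h1
    have h2 := congrArg (fun v => (eigDesc hT.1 ⟨k + r - 1, by omega⟩)⁻¹ • v) h1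
    simp only [smul_smul, inv_mul_cancel₀ (ne_of_gt (hposA _)), one_smul] at h2
    have := spec_ge x hx1 h2
    rwa [abs_of_pos (inv_pos.mpr (hposA _))] at this
  have c4 : spec ((V.submatrix id (Fin.natAdd k))ᵀ * T ^ 2 * V.submatrix id (Fin.natAdd k)) *
      spec (((V.submatrix id (Fin.castAdd r))ᵀ * T ^ 2 *
             V.submatrix id (Fin.castAdd r))⁻¹) ≤ spec T * spec T⁻¹ := by
    refine mul_le_mul (le_trans hs2 (le_trans c2 hspecT))
      (le_trans hsinv (le_trans ?_ hsinvT)) (norm_nonneg _) (norm_nonneg _)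
    exact inv_anti₀ (hposA _) c3
  have he2 : eigDesc hΓ2 ⟨0, by omega⟩ ≤
      spec ((V.submatrix id (Fin.natAdd k))ᵀ * T ^ 2 * V.submatrix id (Fin.natAdd k)) := by
    obtain ⟨x, hx1, hx2⟩ := exists_eigvec hΓ2 ⟨0, by omega⟩
    have := spec_ge x hx1 hx2
    rwa [abs_of_pos hposG2] at this
  have hg1 : (eigDesc hΓ1 ⟨k - 1, by omega⟩)⁻¹ ≤
      spec (((V.submatrix id (Fin.castAdd r))ᵀ * T ^ 2 *
        V.submatrix id (Fin.castAdd r))⁻¹) := by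
    obtain ⟨x, hx1, hx2⟩ := exists_eigvec hΓ1 ⟨k - 1, by omega⟩
    have hdetG1 : IsUnit ((V.submatrix id (Fin.castAdd r))ᵀ * T ^ 2 *
        V.submatrix id (Fin.castAdd r)).det :=
      isUnit_iff_ne_zero.mpr (ne_of_gt hΓ1PD.det_pos)
    have h1 : ((V.submatrix id (Fin.castAdd r))ᵀ * T ^ 2 * V.submatrix id (Fin.castAdd r))⁻¹ *ᵥ
        (((V.submatrix id (Fin.castAdd r))ᵀ * T ^ 2 * V.submatrix id (Fin.castAdd r)) *ᵥ x)
        = x := by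
      rw [mulVec_mulVec, Matrix.nonsing_inv_mul _ hdetG1, one_mulVec]
    rw [hx2, mulVec_smul] at h1
    have h2 := congrArg (fun v => (eigDesc hΓ1 ⟨k - 1, by omega⟩)⁻¹ • v) h1
    simp only [smul_smul, inv_mul_cancel₀ (ne_of_gt hposG1), one_smul] at h2
    have := spec_ge x hx1 h2
    rwa [abs_of_pos (inv_pos.mpr hposG1)] at this
  have c5 : eigDesc hT.1 ⟨k, by omega⟩ / eigDesc hT.1 ⟨k - 1, by omega⟩ ≤
      spec ((V.submatrix id (Fin.natAdd k))ᵀ * T ^ 2 * V.submatrix id (Fin.natAdd k)) *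
        spec (((V.submatrix id (Fin.castAdd r))ᵀ * T ^ 2 *
               V.submatrix id (Fin.castAdd r))⁻¹) := by
    have step1 : eigDesc hT.1 ⟨k, by omega⟩ / eigDesc hT.1 ⟨k - 1, by omega⟩
        ≤ eigDesc hΓ2 ⟨0, by omega⟩ * (eigDesc hΓ1 ⟨k - 1, by omega⟩)⁻¹ := by
      rw [div_eq_mul_inv]
      exact mul_le_mul hIA (inv_anti₀ hposG1 hIB)
        (inv_nonneg.mpr (le_of_lt (hposA _))) (le_of_lt hposG2)
    refine le_trans step1 (mul_le_mul he2 hg1 (inv_nonneg.mpr (le_of_lt hposG1))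
      (le_trans (le_of_lt hposG2) he2))
  exact ⟨by rw [hM]; exact charpoly_conj T Q hQ1, c2, c3, c4, c5⟩
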